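/- arXiv:1106.3851 — 5 statements merged into one kernel-verified Lean document; each statement's English description precedes it below -/
import Mathlib

section
/- Let 0 < a < L be real numbers and z a real number. Then sin(zL) - sin(z(L-a)) = 0 if and only if there exists an integer l such that z = 2πl/a or z = π(2l-1)/(2L-a). -/
open Real

theorem sin_eigenvalue_characterization (a L z : ℝ) (ha : 0 < a) (haL : a < L) :
    Real.sin (z * L) - Real.sin (z * (L - a)) = 0 ↔
      ∃ l : ℤ, z = 2 * π * l / a ∨ z = π * (2 * l - 1) / (2 * L - a) := by
  have ha' : a ≠ 0 := ne_of_gt ha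
  have h2La : 2 * L - a ≠ 0 := by nlinarith
  rw [Real.sin_sub_sin]
  have h1 : (z * L - z * (L - a)) / 2 = z * a / 2 := by ring
  have h2 : (z * L + z * (L - a)) / 2 = z * (2 * L - a) / 2 := by ring
  rw [h1, h2]
  constructor
  · intro h
    rcases mul_eq_zero.1 h with h | h
    · rcases mul_eq_zero.1 h with h | h
      · norm_num at h
      · rw [Real.sin_eq_zero_iff] at h
        obtain ⟨n, hn⟩ := h
        exact ⟨n, Or.inl (by field_simp at hn ⊢; linarith)⟩
    · rw [Real.cos_eq_zero_iff] at h
      obtain ⟨k, hk⟩ := h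
      refine ⟨k + 1, Or.inr ?_⟩
      field_simp at hk ⊢
      push_cast
      linarith [hk]
  · rintro ⟨l, hl | hl⟩
    · have : Real.sin (z * a / 2) = 0 := by
        rw [Real.sin_eq_zero_iff]
        exact ⟨l, by rw [hl]; field_simp⟩
      rw [this]; ring
    · have : Real.cos (z * (2 * L - a) / 2) = 0 := by
        rw [Real.cos_eq_zero_iff]
        refine ⟨l - 1, ?_⟩
        rw [hl]
        push_cast
        field_simp
        ring
      rw [this]; ring
end

section
/- Let F : ℝ × [0,∞) → ℝ be a smooth solution of the heat equation F_t = F_xx on (-L,L) × (0,∞), continuous up to the boundary, satisfying F_x(-L,t) = F_x(-L+a,t) and F_x(L,t) = F_x(L-a,t) for all t > 0, where 0 < a < L. Then the quantity ∫_{-L}^{-L+a} F(x,t) dx is constant in time. -/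
open Real MeasureTheory intervalIntegral Set
open scoped ContDiff

theorem left_boundary_mass_conserved (a L : ℝ) (ha : 0 < a) (haL : a < L)
    (F : ℝ → ℝ → ℝ)
    (hF : ContDiff ℝ (⊤ : ℕ∞) (fun p : ℝ × ℝ => F p.1 p.2))
    (heat : ∀ x ∈ Set.Ioo (-L) L, ∀ t : ℝ, 0 < t →
      deriv (fun s => F x s) t = deriv (deriv (fun y => F y t)) x)
    (bc1 : ∀ t : ℝ, 0 < t → deriv (fun y => F y t) (-L) = deriv (fun y => F y t) (-L + a))
    (bc2 : ∀ t : ℝ, 0 < t → deriv (fun y => F y t) L = deriv (fun y => F y t) (L - a)) :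
    ∀ t₁ t₂ : ℝ, 0 < t₁ → 0 < t₂ →
      (∫ x in (-L)..(-L + a), F x t₁) = ∫ x in (-L)..(-L + a), F x t₂ := by
  set f : ℝ × ℝ → ℝ := fun p => F p.1 p.2 with hfdef
  set Ft : ℝ → ℝ → ℝ := fun x t => fderiv ℝ f (x, t) (0, 1) with hFt
  have hL : (-L : ℝ) ≤ -L + a := by linarith
  -- `Ft x t` is the time derivative of `F x ·` at `t`
  have hA : ∀ x t : ℝ, HasDerivAt (fun s => F x s) (Ft x t) t := by
    intro x t
    have h1 : HasDerivAt (fun s : ℝ => (x, s)) ((0 : ℝ), (1 : ℝ)) t :=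
      (hasDerivAt_const t x).prodMk (hasDerivAt_id t)
    exact ((hF.differentiable (by simp) (x, t)).hasFDerivAt).comp_hasDerivAt t h1
  -- joint continuity of `Ft`
  have hFt_cont : Continuous fun p : ℝ × ℝ => Ft p.1 p.2 := by
    have h1 : Continuous (fderiv ℝ f) := hF.continuous_fderiv (by simp)
    exact h1.clm_apply continuous_const
  -- continuity of x ↦ F x t
  have hFx_cont : ∀ t : ℝ, Continuous fun x => F x t := fun t =>
    hF.continuous.comp (continuous_id.prodMk continuous_const)
  -- smoothness of x ↦ F x t
  have hg : ∀ t : ℝ, ContDiff ℝ (⊤ : ℕ∞) (fun y => F y t) := fun t =>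
    hF.comp (contDiff_id.prodMk contDiff_const)
  -- inner spatial integral vanishes
  have hB : ∀ t : ℝ, 0 < t → (∫ x in (-L)..(-L + a), Ft x t) = 0 := by
    intro t ht
    have hgt : ContDiff ℝ ∞ (fun y => F y t) := (hg t).of_le (by simp)
    have hdg : ContDiff ℝ ∞ (deriv fun y => F y t) := (contDiff_infty_iff_deriv.mp hgt).2
    have h1 : (∫ x in (-L)..(-L + a), Ft x t)
        = ∫ x in (-L)..(-L + a), deriv (deriv fun y => F y t) x := by
      apply intervalIntegral.integral_congr_ae
      refine Filter.Eventually.of_forall fun x hx => ?_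
      rw [Set.uIoc_of_le hL] at hx
      have hxI : x ∈ Set.Ioo (-L) L := ⟨hx.1, by linarith [hx.2]⟩
      rw [← heat x hxI t ht]
      exact (hA x t).deriv.symm
    rw [h1]
    rw [intervalIntegral.integral_deriv_eq_sub
      (fun x _ => (hdg.differentiable (by norm_num)).differentiableAt)
      ((hdg.continuous_deriv (by norm_num)).intervalIntegrable _ _)]
    rw [← bc1 t ht]
    ring
  -- main claim, for ordered times
  have key : ∀ t₁ t₂ : ℝ, 0 < t₁ → 0 < t₂ → t₁ ≤ t₂ →
      (∫ x in (-L)..(-L + a), F x t₁) = ∫ x in (-L)..(-L + a), F x t₂ := by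
    intro t₁ t₂ ht₁ ht₂ hle
    have hsub : (∫ x in (-L)..(-L + a), F x t₂) - (∫ x in (-L)..(-L + a), F x t₁)
        = ∫ x in (-L)..(-L + a), (F x t₂ - F x t₁) := by
      rw [intervalIntegral.integral_sub ((hFx_cont t₂).intervalIntegrable _ _)
        ((hFx_cont t₁).intervalIntegrable _ _)]
    have hFTC : ∀ x : ℝ, F x t₂ - F x t₁ = ∫ s in t₁..t₂, Ft x s := by
      intro x
      rw [intervalIntegral.integral_eq_sub_of_hasDerivAt (fun s _ => hA x s)
        ((hFt_cont.comp (continuous_const.prodMk continuous_id)).intervalIntegrable _ _)]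
    have hInt : IntegrableOn (Function.uncurry Ft)
        ((Set.Ioc (-L) (-L + a)) ×ˢ (Set.Ioc t₁ t₂)) (volume.prod volume) := by
      apply IntegrableOn.mono_set (t := (Set.Icc (-L) (-L + a)) ×ˢ (Set.Icc t₁ t₂))
      · exact hFt_cont.continuousOn.integrableOn_compact (isCompact_Icc.prod isCompact_Icc)
      · exact Set.prod_mono Set.Ioc_subset_Icc_self Set.Ioc_subset_Icc_self
    have hswap : (∫ x in Set.Ioc (-L) (-L + a), ∫ s in Set.Ioc t₁ t₂, Ft x s)
        = ∫ s in Set.Ioc t₁ t₂, ∫ x in Set.Ioc (-L) (-L + a), Ft x s := by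
      apply MeasureTheory.integral_integral_swap
      rwa [MeasureTheory.Measure.prod_restrict]
    have hzero : (∫ x in (-L)..(-L + a), (F x t₂ - F x t₁)) = 0 := by
      calc (∫ x in (-L)..(-L + a), (F x t₂ - F x t₁))
          = ∫ x in (-L)..(-L + a), ∫ s in t₁..t₂, Ft x s := by
            exact intervalIntegral.integral_congr fun x _ => hFTC x
        _ = ∫ x in Set.Ioc (-L) (-L + a), ∫ s in Set.Ioc t₁ t₂, Ft x s := by
            rw [intervalIntegral.integral_of_le hL]
            exact setIntegral_congr_fun measurableSet_Ioc fun x _ =>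
              intervalIntegral.integral_of_le hle
        _ = ∫ s in Set.Ioc t₁ t₂, ∫ x in Set.Ioc (-L) (-L + a), Ft x s := hswap
        _ = ∫ s in Set.Ioc t₁ t₂, (0 : ℝ) := by
            refine setIntegral_congr_fun measurableSet_Ioc fun s hs => ?_
            have hs0 : 0 < s := lt_of_lt_of_le ht₁ (le_of_lt hs.1)
            rw [← intervalIntegral.integral_of_le hL]
            exact hB s hs0
        _ = 0 := by simp
    linarith [hsub ▸ hzero]
  intro t₁ t₂ ht₁ ht₂
  rcases le_total t₁ t₂ with h | h
  · exact key t₁ t₂ ht₁ ht₂ h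
  · exact (key t₂ t₁ ht₂ ht₁ h).symm
end

section
/- Let V be a smooth solution of the heat equation V_t = V_xx on [-L,L] × [0,T], satisfying V(-L,t) = V(-L+a,t) and V(L,t) = V(L-a,t) for all t ∈ [0,T], with 0 < a < L. Then sup over [-L,L]×[0,T] of |V| equals sup over [-L,L] of |V(·,0)|; i.e. the maximum and minimum of V over the parabolic cylinder are attained at t = 0. -/
open Real Set Filter Topology

/-- If `f` has derivative `d` at `t` and `f y ≤ f t` for all `y ∈ [b, t]` with `b < t`,
then `0 ≤ d`. -/
lemma left_deriv_nonneg_of_max {f : ℝ → ℝ} {b t d : ℝ} (hbt : b < t)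
    (hf : HasDerivAt f d t) (hmax : ∀ y ∈ Set.Icc b t, f y ≤ f t) : 0 ≤ d := by
  by_contra hd
  push_neg at hd
  have hs : Tendsto (slope f t) (𝓝[<] t) (𝓝 d) :=
    (hasDerivAt_iff_tendsto_slope.mp hf).mono_left
      (nhdsWithin_mono _ fun y hy => ne_of_lt hy)
  have h2 : ∀ᶠ y in 𝓝[<] t, slope f t y < 0 := hs.eventually (eventually_lt_nhds hd)
  have h3 : ∀ᶠ y in 𝓝[<] t, y ∈ Set.Ioo b t :=
    Ioo_mem_nhdsLT_of_mem ⟨hbt, le_rfl⟩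
  obtain ⟨y, hy1, hy2⟩ := (h2.and h3).exists
  rw [slope_def_field] at hy1
  have hden : y - t < 0 := sub_neg.mpr hy2.2
  have hnum : 0 < f y - f t := by
    rcases div_neg_iff.mp hy1 with ⟨h, h'⟩ | ⟨h, h'⟩
    · linarith
    · linarith
  have := hmax y ⟨hy2.1.le, hy2.2.le⟩
  linarith

/-- Second derivative test: at a local max of a smooth function, the second
derivative is nonpositive. -/
lemma second_deriv_nonpos_of_isLocalMax {g : ℝ → ℝ} {x : ℝ} (hg : ContDiff ℝ (⊤ : ℕ∞) g)
    (h : IsLocalMax g x) : deriv (deriv g) x ≤ 0 := by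
  by_contra hd
  push_neg at hd
  set f := deriv g with hfdef
  have hg' : ContDiff ℝ ((⊤ : ℕ∞) : WithTop ℕ∞) g := hg.of_le (by simp)
  have hf : ContDiff ℝ ((⊤ : ℕ∞) : WithTop ℕ∞) f := (contDiff_infty_iff_deriv.mp hg').2
  have hfx : f x = 0 := h.deriv_eq_zero
  have hf' : HasDerivAt f (deriv f x) x := ((hf.differentiable (by simp)) x).hasDerivAt
  have hs : Tendsto (slope f x) (𝓝[>] x) (𝓝 (deriv f x)) :=
    (hasDerivAt_iff_tendsto_slope.mp hf').mono_left
      (nhdsWithin_mono _ fun y hy => ne_of_gt hy)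
  have h2 : ∀ᶠ y in 𝓝[>] x, 0 < slope f x y := hs.eventually (eventually_gt_nhds hd)
  obtain ⟨u, hu, hIoo⟩ := mem_nhdsGT_iff_exists_Ioo_subset.mp h2
  obtain ⟨r, hr0, hr⟩ := Metric.eventually_nhds_iff.mp h
  have hu' : x < u := hu
  set w := min u (x + r) with hwdef
  have hxw : x < w := lt_min hu' (by linarith)
  set m := (x + w) / 2 with hmdef
  have hxm : x < m := by simp only [hmdef]; linarith
  have hmw : m < w := by simp only [hmdef]; linarith
  -- f is positive on Ioo x m
  have hfpos : ∀ y ∈ Set.Ioo x m, 0 < f y := by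
    intro y hy
    have hyu : y ∈ Set.Ioo x u := ⟨hy.1, lt_of_lt_of_le (hy.2.trans hmw) (min_le_left _ _)⟩
    have hsl : 0 < slope f x y := hIoo hyu
    rw [slope_def_field, hfx, sub_zero] at hsl
    have hyx : 0 < y - x := sub_pos.mpr hy.1
    rcases div_pos_iff.mp hsl with ⟨h1, _⟩ | ⟨_, h2'⟩
    · exact h1
    · linarith
  have hmono : StrictMonoOn g (Set.Icc x m) := by
    apply strictMonoOn_of_deriv_pos (convex_Icc _ _) hg.continuous.continuousOn
    intro y hy
    rw [interior_Icc] at hy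
    exact hfpos y hy
  have hlt : g x < g m := hmono ⟨le_rfl, hxm.le⟩ ⟨hxm.le, le_rfl⟩ hxm
  have hdist : dist m x < r := by
    rw [Real.dist_eq, abs_of_pos (by linarith : (0:ℝ) < m - x)]
    have : w ≤ x + r := min_le_right _ _
    simp only [hmdef]; linarith
  exact absurd (hr hdist) (not_le.mpr hlt)

/-- One-sided maximum principle for the heat equation with the nonlocal
boundary conditions. -/
lemma one_sided_max_principle (a L T : ℝ) (ha : 0 < a) (haL : a < L) (hT : 0 < T)
    (V : ℝ → ℝ → ℝ)
    (hV : ContDiff ℝ (⊤ : ℕ∞) (fun p : ℝ × ℝ => V p.1 p.2))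
    (heat : ∀ x ∈ Set.Icc (-L) L, ∀ t ∈ Set.Icc (0 : ℝ) T,
      deriv (fun s => V x s) t = deriv (deriv (fun y => V y t)) x)
    (bc1 : ∀ t ∈ Set.Icc (0 : ℝ) T, V (-L) t = V (-L + a) t)
    (bc2 : ∀ t ∈ Set.Icc (0 : ℝ) T, V L t = V (L - a) t) :
    ∀ x ∈ Set.Icc (-L) L, ∀ t ∈ Set.Icc (0 : ℝ) T,
      V x t ≤ sSup ((fun x => V x 0) '' Set.Icc (-L) L) := by
  have hL : 0 < L := ha.trans haL
  have hLL : -L < L := by linarith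
  have hVc : Continuous fun p : ℝ × ℝ => V p.1 p.2 := hV.continuous
  -- smoothness in each variable
  have hx_smooth : ∀ t : ℝ, ContDiff ℝ (⊤ : ℕ∞) (fun y => V y t) := fun t =>
    hV.comp (contDiff_id.prodMk contDiff_const)
  have ht_smooth : ∀ x : ℝ, ContDiff ℝ (⊤ : ℕ∞) (fun s => V x s) := fun x =>
    hV.comp (contDiff_const.prodMk contDiff_id)
  set S0 := sSup ((fun x => V x 0) '' Set.Icc (-L) L) with hS0
  have hK : IsCompact (Set.Icc (-L) L ×ˢ Set.Icc (0:ℝ) T) := isCompact_Icc.prod isCompact_Icc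
  have hKne : (Set.Icc (-L) L ×ˢ Set.Icc (0:ℝ) T).Nonempty :=
    (nonempty_Icc.mpr hLL.le).prod (nonempty_Icc.mpr hT.le)
  have hBdd0 : BddAbove ((fun x => V x 0) '' Set.Icc (-L) L) :=
    (isCompact_Icc.image (hVc.comp (continuous_id.prodMk continuous_const))).bddAbove
  -- main estimate with ε
  have key : ∀ ε > (0:ℝ), ∀ x ∈ Set.Icc (-L) L, ∀ t ∈ Set.Icc (0:ℝ) T,
      V x t ≤ S0 + ε * T := by
    intro ε hε x hx t ht
    set W := fun p : ℝ × ℝ => V p.1 p.2 - ε * p.2 with hWdef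
    have hWc : Continuous W := hVc.sub (continuous_const.mul continuous_snd)
    obtain ⟨p₀, hp₀K, hp₀max⟩ := hK.exists_isMaxOn hKne hWc.continuousOn
    obtain ⟨x₀, t₀⟩ := p₀
    have hx₀ : x₀ ∈ Set.Icc (-L) L := hp₀K.1
    have ht₀ : t₀ ∈ Set.Icc (0:ℝ) T := hp₀K.2
    -- claim t₀ = 0
    have ht₀0 : t₀ = 0 := by
      by_contra ht₀ne
      have ht₀pos : 0 < t₀ := lt_of_le_of_ne ht₀.1 (Ne.symm ht₀ne)
      -- find interior point x₁ with same max value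
      obtain ⟨x₁, hx₁, hval⟩ : ∃ x₁ ∈ Set.Ioo (-L) L, V x₁ t₀ = V x₀ t₀ := by
        rcases eq_or_ne x₀ (-L) with h | h
        · exact ⟨-L + a, ⟨by linarith, by linarith⟩, by rw [h, bc1 t₀ ht₀]⟩
        rcases eq_or_ne x₀ L with h' | h'
        · exact ⟨L - a, ⟨by linarith, by linarith⟩, by rw [h', bc2 t₀ ht₀]⟩
        · exact ⟨x₀, ⟨lt_of_le_of_ne hx₀.1 (Ne.symm h), lt_of_le_of_ne hx₀.2 h'⟩, rfl⟩
      have hx₁I : x₁ ∈ Set.Icc (-L) L := ⟨hx₁.1.le, hx₁.2.le⟩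
      -- x₁ is a local max of g := V · t₀
      have hlocmax : IsLocalMax (fun y => V y t₀) x₁ := by
        have hmem : Set.Icc (-L) L ∈ 𝓝 x₁ := Icc_mem_nhds hx₁.1 hx₁.2
        filter_upwards [hmem] with y hy
        have h' : V y t₀ - ε * t₀ ≤ V x₀ t₀ - ε * t₀ :=
          hp₀max (Set.mk_mem_prod hy ht₀ : (y, t₀) ∈ _)
        show V y t₀ ≤ V x₁ t₀
        rw [hval]
        linarith
      have hder2 : deriv (deriv (fun y => V y t₀)) x₁ ≤ 0 :=
        second_deriv_nonpos_of_isLocalMax (hx_smooth t₀) hlocmax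
      -- time derivative: max on Icc 0 t₀ at t₀
      have hht : HasDerivAt (fun s => V x₁ s - ε * s)
          (deriv (fun s => V x₁ s) t₀ - ε) t₀ := by
        have h1 : HasDerivAt (fun s => V x₁ s) (deriv (fun s => V x₁ s) t₀) t₀ :=
          (((ht_smooth x₁).differentiable (by simp)) t₀).hasDerivAt
        have h2 : HasDerivAt (fun s : ℝ => ε * s) ε t₀ := by
          simpa using (hasDerivAt_id t₀).const_mul ε
        exact h1.sub h2
      have hmaxt : ∀ y ∈ Set.Icc 0 t₀, (fun s => V x₁ s - ε * s) y ≤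
          (fun s => V x₁ s - ε * s) t₀ := by
        intro y hy
        have hyT : y ∈ Set.Icc (0:ℝ) T := ⟨hy.1, hy.2.trans ht₀.2⟩
        have h' : V x₁ y - ε * y ≤ V x₀ t₀ - ε * t₀ :=
          hp₀max (Set.mk_mem_prod hx₁I hyT : (x₁, y) ∈ _)
        show V x₁ y - ε * y ≤ V x₁ t₀ - ε * t₀
        rw [hval]
        linarith
      have hnn : 0 ≤ deriv (fun s => V x₁ s) t₀ - ε :=
        left_deriv_nonneg_of_max ht₀pos hht hmaxt
      rw [heat x₁ hx₁I t₀ ht₀] at hnn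
      linarith
    -- conclude
    have hWle : V x t - ε * t ≤ V x₀ t₀ - ε * t₀ :=
      hp₀max (Set.mk_mem_prod hx ht : (x, t) ∈ _)
    rw [ht₀0] at hWle
    have hV0le : V x₀ 0 ≤ S0 := le_csSup hBdd0 ⟨x₀, hx₀, rfl⟩
    have hεt : ε * t ≤ ε * T := mul_le_mul_of_nonneg_left ht.2 hε.le
    have hεt0 : 0 ≤ ε * t := mul_nonneg hε.le ht.1
    linarith
  intro x hx t ht
  by_contra hcon
  push_neg at hcon
  have h2T : (0:ℝ) < 2 * T := by linarith
  have hpos' : (V x t - S0) / (2 * T) > 0 := div_pos (by linarith) h2T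
  have hk := key _ hpos' x hx t ht
  have heq : (V x t - S0) / (2 * T) * T = (V x t - S0) / 2 := by
    field_simp
  rw [heq] at hk
  linarith

theorem max_principle_nonlocal_bc (a L T : ℝ) (ha : 0 < a) (haL : a < L) (hT : 0 < T)
    (V : ℝ → ℝ → ℝ)
    (hV : ContDiff ℝ (⊤ : ℕ∞) (fun p : ℝ × ℝ => V p.1 p.2))
    (heat : ∀ x ∈ Set.Icc (-L) L, ∀ t ∈ Set.Icc (0 : ℝ) T,
      deriv (fun s => V x s) t = deriv (deriv (fun y => V y t)) x)
    (bc1 : ∀ t ∈ Set.Icc (0 : ℝ) T, V (-L) t = V (-L + a) t)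
    (bc2 : ∀ t ∈ Set.Icc (0 : ℝ) T, V L t = V (L - a) t) :
    sSup ((fun p : ℝ × ℝ => |V p.1 p.2|) '' (Set.Icc (-L) L ×ˢ Set.Icc 0 T)) =
      sSup ((fun x => |V x 0|) '' Set.Icc (-L) L) := by
  have hL : 0 < L := ha.trans haL
  have hLL : -L < L := by linarith
  have hVc : Continuous fun p : ℝ × ℝ => V p.1 p.2 := hV.continuous
  have hKne : (Set.Icc (-L) L ×ˢ Set.Icc (0:ℝ) T).Nonempty :=
    (nonempty_Icc.mpr hLL.le).prod (nonempty_Icc.mpr hT.le)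
  have hIne : (Set.Icc (-L) L).Nonempty := nonempty_Icc.mpr hLL.le
  have hBddAbs0 : BddAbove ((fun x => |V x 0|) '' Set.Icc (-L) L) :=
    (isCompact_Icc.image ((hVc.comp (continuous_id.prodMk continuous_const)).abs)).bddAbove
  have hBddAbsK : BddAbove ((fun p : ℝ × ℝ => |V p.1 p.2|) ''
      (Set.Icc (-L) L ×ˢ Set.Icc (0:ℝ) T)) :=
    ((isCompact_Icc.prod isCompact_Icc).image hVc.abs).bddAbove
  set R := sSup ((fun x => |V x 0|) '' Set.Icc (-L) L) with hR
  -- one-sided estimates for V and -V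
  have hpos := one_sided_max_principle a L T ha haL hT V hV heat bc1 bc2
  have hneg := one_sided_max_principle a L T ha haL hT (fun x t => -V x t)
    hV.neg
    (by
      intro x hx t ht
      have e1 : (fun s => -V x s) = fun s => -(fun s => V x s) s := rfl
      have e2 : deriv (fun s => -V x s) t = -deriv (fun s => V x s) t := by
        rw [e1, deriv.fun_neg]
      have e3 : deriv (fun y => -V y t) = fun y => -deriv (fun y => V y t) y :=
        funext fun y => deriv.fun_neg
      have e4 : deriv (deriv (fun y => -V y t)) x
          = -deriv (deriv (fun y => V y t)) x := by
        rw [e3]; exact deriv.fun_neg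
      rw [e2, e4, heat x hx t ht])
    (fun t ht => by show -V (-L) t = -V (-L + a) t; rw [bc1 t ht])
    (fun t ht => by show -V L t = -V (L - a) t; rw [bc2 t ht])
  -- sSup (V·0) ≤ R and sSup (-V·0) ≤ R
  have hposR : sSup ((fun x => V x 0) '' Set.Icc (-L) L) ≤ R :=
    csSup_le (hIne.image _) (by
      rintro z ⟨y, hy, rfl⟩
      exact le_trans (le_abs_self _) (le_csSup hBddAbs0 ⟨y, hy, rfl⟩))
  have hnegR : sSup ((fun x => -V x 0) '' Set.Icc (-L) L) ≤ R :=
    csSup_le (hIne.image _) (by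
      rintro z ⟨y, hy, rfl⟩
      exact le_trans (neg_le_abs _) (le_csSup hBddAbs0 ⟨y, hy, rfl⟩))
  apply le_antisymm
  · apply csSup_le (hKne.image _)
    rintro z ⟨⟨x, t⟩, ⟨hx, ht⟩, rfl⟩
    have h1 : V x t ≤ R := le_trans (hpos x hx t ht) hposR
    have h2 : -V x t ≤ R := le_trans (hneg x hx t ht) hnegR
    exact abs_le.mpr ⟨by linarith, h1⟩
  · apply csSup_le (hIne.image _)
    rintro z ⟨y, hy, rfl⟩
    exact le_csSup hBddAbsK ⟨(y, 0), Set.mk_mem_prod hy ⟨le_rfl, hT.le⟩, rfl⟩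
end

section
/- Let 0 < a < L and let M_B, M_V > 0 be such that M_B/M_V ∉ [a/(4L-3a), (4L-3a)/a]. Then there exist no α > 0 and p∞ ∈ [-L+a, L-a] such that M_B = α(p∞ + L - a/2) and M_V = α(L - p∞ - a/2). -/
open Real Set

theorem nonexistence_of_steady_state (a L M_B M_V : ℝ) (ha : 0 < a) (haL : a < L)
    (hMB : 0 < M_B) (hMV : 0 < M_V)
    (hratio : M_B / M_V ∉ Set.Icc (a / (4 * L - 3 * a)) ((4 * L - 3 * a) / a)) :
    ¬∃ α : ℝ, 0 < α ∧ ∃ pinf ∈ Set.Icc (-L + a) (L - a),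
      M_B = α * (pinf + L - a / 2) ∧ M_V = α * (L - pinf - a / 2) := by
  rintro ⟨α, hα, pinf, ⟨hp1, hp2⟩, hB, hV⟩
  apply hratio
  have hden : 0 < 4 * L - 3 * a := by linarith
  constructor
  · rw [div_le_div_iff₀ hden hMV]
    nlinarith
  · rw [div_le_div_iff₀ hMV ha]
    nlinarith
end

section
/- Let f : ℝ → ℝ be a continuous function vanishing outside [-L,L], with f(p)=0 for some p, f > 0 on (-L,p) and f < 0 on (p,L). Fix a > 0. Define F(x) = Σ_{n=0}^∞ f⁺(x+na) for x < p and F(x) = -Σ_{n=0}^∞ f⁻(x-na) for x > p, where f⁺ = max(f,0), f⁻ = max(-f,0) (each extended by 0 outside (-L,L)). Then both series have only finitely many nonzero terms at each x (in fact at most ⌈2L/a⌉ terms), F(p)=0, and F(x) > 0 for x ∈ (-L,p), F(x) < 0 for x ∈ (p,L). -/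
open Real Set

lemma aux_nat_count (a c : ℝ) (ha : 0 < a) (S : Set ℕ)
    (h : ∀ m ∈ S, ∀ n ∈ S, ((m : ℝ) - n) * a < c) :
    S.Finite ∧ S.ncard ≤ ⌈c / a⌉₊ := by
  rcases S.eq_empty_or_nonempty with hS | hS
  · simp [hS]
  · have hk : sInf S ∈ S := Nat.sInf_mem hS
    have hsub : S ⊆ Set.Ico (sInf S) (sInf S + ⌈c / a⌉₊) := by
      intro n hn
      refine ⟨Nat.sInf_le hn, ?_⟩
      have h1 : ((n : ℝ) - sInf S) * a < c := h n hn (sInf S) hk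
      have h2 : (n : ℝ) - sInf S < c / a := (lt_div_iff₀ ha).2 h1
      have h4 : c / a ≤ (⌈c / a⌉₊ : ℝ) := Nat.le_ceil _
      have h3 : (n : ℝ) < ((sInf S + ⌈c / a⌉₊ : ℕ) : ℝ) := by push_cast; linarith
      exact_mod_cast h3
    have hsub' : S ⊆ ↑(Finset.Ico (sInf S) (sInf S + ⌈c / a⌉₊)) := by
      rw [Finset.coe_Ico]; exact hsub
    have hfin : S.Finite := (Set.finite_Ico _ _).subset hsub
    refine ⟨hfin, ?_⟩
    calc S.ncard ≤ (↑(Finset.Ico (sInf S) (sInf S + ⌈c / a⌉₊)) : Set ℕ).ncard :=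
          Set.ncard_le_ncard hsub' (Finset.finite_toSet _)
      _ = (Finset.Ico (sInf S) (sInf S + ⌈c / a⌉₊)).card := Set.ncard_coe_finset _
      _ = ⌈c / a⌉₊ := by rw [Nat.card_Ico]; omega
  
theorem unfolding_transformation_sign (a L p : ℝ) (ha : 0 < a) (hL : 0 < L)
    (hp : p ∈ Set.Ioo (-L) L)
    (f : ℝ → ℝ) (hf : Continuous f)
    (hsupp : ∀ x : ℝ, x ∉ Set.Icc (-L) L → f x = 0)
    (hfp : f p = 0)
    (hpos : ∀ x ∈ Set.Ioo (-L) p, 0 < f x)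
    (hneg : ∀ x ∈ Set.Ioo p L, f x < 0)
    (fplus fminus : ℝ → ℝ)
    (hfplus : ∀ x, fplus x = max (f x) 0) (hfminus : ∀ x, fminus x = max (-f x) 0)
    (F : ℝ → ℝ)
    (hF : ∀ x : ℝ, F x = if x < p then ∑' n : ℕ, fplus (x + n * a)
      else if x = p then 0 else -∑' n : ℕ, fminus (x - n * a)) :
    (∀ x : ℝ, {n : ℕ | fplus (x + n * a) ≠ 0}.Finite ∧
        {n : ℕ | fplus (x + n * a) ≠ 0}.ncard ≤ ⌈2 * L / a⌉₊) ∧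
    (∀ x : ℝ, {n : ℕ | fminus (x - n * a) ≠ 0}.Finite ∧
        {n : ℕ | fminus (x - n * a) ≠ 0}.ncard ≤ ⌈2 * L / a⌉₊) ∧
    F p = 0 ∧
    (∀ x ∈ Set.Ioo (-L) p, 0 < F x) ∧
    (∀ x ∈ Set.Ioo p L, F x < 0) := by
  obtain ⟨hpL, hpR⟩ := hp
  -- f vanishes at the boundary by continuity
  have hfL : f L = 0 := by
    have h1 : Filter.Tendsto f (nhdsWithin L (Set.Ioi L)) (nhds (f L)) :=
      (hf.tendsto L).mono_left nhdsWithin_le_nhds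
    have h2 : Filter.Tendsto f (nhdsWithin L (Set.Ioi L)) (nhds 0) := by
      refine Filter.Tendsto.congr' ?_ tendsto_const_nhds
      filter_upwards [self_mem_nhdsWithin] with y hy
      exact (hsupp y (by simp only [Set.mem_Icc, not_and_or, not_le]; right; exact hy)).symm
    exact tendsto_nhds_unique h1 h2
  have hfnL : f (-L) = 0 := by
    have h1 : Filter.Tendsto f (nhdsWithin (-L) (Set.Iio (-L))) (nhds (f (-L))) :=
      (hf.tendsto (-L)).mono_left nhdsWithin_le_nhds
    have h2 : Filter.Tendsto f (nhdsWithin (-L) (Set.Iio (-L))) (nhds 0) := by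
      refine Filter.Tendsto.congr' ?_ tendsto_const_nhds
      filter_upwards [self_mem_nhdsWithin] with y hy
      exact (hsupp y (by simp only [Set.mem_Icc, not_and_or, not_le]; left; exact hy)).symm
    exact tendsto_nhds_unique h1 h2
  have hplus_mem : ∀ y, fplus y ≠ 0 → y ∈ Set.Ico (-L) p := by
    intro y hy
    rw [hfplus] at hy
    have hfy : 0 < f y := by
      by_contra h
      push_neg at h
      exact hy (max_eq_right h)
    constructor
    · by_contra h
      push_neg at h
      have : f y = 0 := hsupp y (by simp [Set.mem_Icc]; intro h'; linarith)
      linarith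
    · by_contra h
      push_neg at h
      rcases eq_or_lt_of_le h with h' | h'
      · rw [h'] at hfp; linarith
      · rcases lt_trichotomy y L with h2 | h2 | h2
        · have := hneg y ⟨h', h2⟩; linarith
        · rw [h2] at hfy; linarith
        · have : f y = 0 := hsupp y (by simp [Set.mem_Icc]; intro h3; linarith)
          linarith
  have hminus_mem : ∀ y, fminus y ≠ 0 → y ∈ Set.Ioc p L := by
    intro y hy
    rw [hfminus] at hy
    have hfy : f y < 0 := by
      by_contra h
      push_neg at h
      exact hy (max_eq_right (by linarith))
    constructor
    · by_contra h
      push_neg at h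
      rcases eq_or_lt_of_le h with h' | h'
      · rw [← h'] at hfp; linarith
      · rcases lt_trichotomy (-L) y with h2 | h2 | h2
        · have := hpos y ⟨h2, h'⟩; linarith
        · rw [← h2] at hfy; linarith
        · have : f y = 0 := hsupp y (by simp [Set.mem_Icc]; intro h3; linarith)
          linarith
    · by_contra h
      push_neg at h
      have : f y = 0 := hsupp y (by simp [Set.mem_Icc]; intro h3; linarith)
      linarith
  have hplusCount : ∀ x : ℝ, {n : ℕ | fplus (x + n * a) ≠ 0}.Finite ∧
      {n : ℕ | fplus (x + n * a) ≠ 0}.ncard ≤ ⌈2 * L / a⌉₊ := by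
    intro x
    apply aux_nat_count a (2 * L) ha
    intro m hm n hn
    have h1 := hplus_mem _ hm
    have h2 := hplus_mem _ hn
    have : ((m : ℝ) - n) * a = (x + m * a) - (x + n * a) := by ring
    rw [this]
    have := h1.2
    have := h2.1
    linarith
  have hminusCount : ∀ x : ℝ, {n : ℕ | fminus (x - n * a) ≠ 0}.Finite ∧
      {n : ℕ | fminus (x - n * a) ≠ 0}.ncard ≤ ⌈2 * L / a⌉₊ := by
    intro x
    apply aux_nat_count a (2 * L) ha
    intro m hm n hn
    have h1 := hminus_mem _ hm
    have h2 := hminus_mem _ hn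
    have : ((m : ℝ) - n) * a = (x - n * a) - (x - m * a) := by ring
    rw [this]
    have := h2.2
    have := h1.1
    linarith
  refine ⟨hplusCount, hminusCount, ?_, ?_, ?_⟩
  · rw [hF p]; simp
  · intro x hx
    rw [hF x, if_pos hx.2]
    have hsum : Summable (fun n : ℕ => fplus (x + n * a)) := by
      apply summable_of_ne_finset_zero (s := (hplusCount x).1.toFinset)
      intro n hn
      by_contra h
      exact hn ((hplusCount x).1.mem_toFinset.2 h)
    refine Summable.tsum_pos hsum (fun n => by rw [hfplus]; exact le_max_right _ _) 0 ?_
    have : x + (0 : ℕ) * a = x := by push_cast; ring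
    rw [this, hfplus]
    exact lt_max_of_lt_left (hpos x hx)
  · intro x hx
    rw [hF x, if_neg (by linarith [hx.1]), if_neg (by linarith [hx.1])]
    have hsum : Summable (fun n : ℕ => fminus (x - n * a)) := by
      apply summable_of_ne_finset_zero (s := (hminusCount x).1.toFinset)
      intro n hn
      by_contra h
      exact hn ((hminusCount x).1.mem_toFinset.2 h)
    have hposs : 0 < ∑' n : ℕ, fminus (x - n * a) := by
      refine Summable.tsum_pos hsum (fun n => by rw [hfminus]; exact le_max_right _ _) 0 ?_
      have : x - (0 : ℕ) * a = x := by push_cast; ring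
      rw [this, hfminus]
      exact lt_max_of_lt_left (by linarith [hneg x hx])
    linarith
end
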